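/- arXiv:1507.07677 — 2 statements merged into one kernel-verified Lean document; each statement's English description precedes it below -/
import Mathlib

section
/- Let (w_1,…,w_N; v_1,…,v_N; W) be a Knapsack instance with positive integer weights and values and let G be the associated concurrent-move game tree. For every subset J ⊆ {1,…,N} with Σ_{i∈J} w_i ≤ W, consider the leader behavioral strategy that plays the uniform distribution over l_1,…,l_N at the root and, in each subgame I_i, plays ⊕ with probability 1 if i ∈ J and ⊖ with probability 1 otherwise. Under a follower best response to this strategy with ties broken in favor of the leader, the follower plays f_0 at the root and L in each I_i with i ∈ J and R in each I_i with i ∉ J, and the leader's expected utility equals Σ_{i∈J} v_i. -/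
/-!
Against the uniform root strategy every deviation `f_k` earns the follower exactly `-W`: the
bonus `N·M` is collected with probability `1/N` only. Playing `f_0` instead costs the weight of
`J` plus the weight of every item outside `J` where the follower answers `L`. Since `J` is
feasible, `f_0` with `L` exactly on `J` is optimal, and a best response that puts positive
probability on `f_0` must play `R` outside `J` because all weights are positive. The leader
therefore earns at most `Σ_{i∈J} v i`, which the intended response attains.
-/

open scoped BigOperators

noncomputable section

namespace KnapsackGame

/-- A behavioral strategy of the leader in the concurrent-move game tree associated with a
Knapsack instance with `N` items: `q i` is the probability of root action `l_i`, and
`r i` is the probability of action `⊕` in the subgame `I_i`. -/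
structure LStrat (N : ℕ) where
  q : Fin N → ℝ
  r : Fin N → ℝ

/-- A behavioral strategy of the follower: `g 0` is the probability of root action `f_0`,
`g k.succ` the probability of `f_{k+1}`, and `s i` the probability of `L` in subgame `I_i`. -/
structure FStrat (N : ℕ) where
  g : Fin (N + 1) → ℝ
  s : Fin N → ℝ

/-- Validity of a leader behavioral strategy. -/
def LValid {N : ℕ} (σ : LStrat N) : Prop :=
  (∀ i, 0 ≤ σ.q i) ∧ (∑ i, σ.q i) = 1 ∧ ∀ i, 0 ≤ σ.r i ∧ σ.r i ≤ 1

/-- Validity of a follower behavioral strategy. -/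
def FValid {N : ℕ} (τ : FStrat N) : Prop :=
  (∀ k, 0 ≤ τ.g k) ∧ (∑ k, τ.g k) = 1 ∧ ∀ i, 0 ≤ τ.s i ∧ τ.s i ≤ 1

/-- The leader's expected utility in the subgame `I_i`:
`(⊕,L) ↦ N·v i`, `(⊕,R) ↦ 0`, `(⊖,L) ↦ N·v i`, `(⊖,R) ↦ 0`. -/
def subEU1 (N : ℕ) (v : Fin N → ℕ) (σ : LStrat N) (τ : FStrat N) (i : Fin N) : ℝ :=
  σ.r i * (τ.s i * ((N : ℝ) * (v i : ℝ)) + (1 - τ.s i) * 0) +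
    (1 - σ.r i) * (τ.s i * ((N : ℝ) * (v i : ℝ)) + (1 - τ.s i) * 0)

/-- The follower's expected utility in the subgame `I_i`:
`(⊕,L) ↦ -N·w i`, `(⊕,R) ↦ -N·w i`, `(⊖,L) ↦ -N·w i`, `(⊖,R) ↦ 0`. -/
def subEU2 (N : ℕ) (w : Fin N → ℕ) (σ : LStrat N) (τ : FStrat N) (i : Fin N) : ℝ :=
  σ.r i * (τ.s i * (-((N : ℝ) * (w i : ℝ))) + (1 - τ.s i) * (-((N : ℝ) * (w i : ℝ)))) +
    (1 - σ.r i) * (τ.s i * (-((N : ℝ) * (w i : ℝ))) + (1 - τ.s i) * 0)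

/-- The leader's expected utility in the whole game: terminal payoffs after `f_k`, `k ≥ 1`,
give the leader `0`. -/
def EU1 (N : ℕ) (v : Fin N → ℕ) (σ : LStrat N) (τ : FStrat N) : ℝ :=
  τ.g 0 * (∑ i, σ.q i * subEU1 N v σ τ i) +
    ∑ k : Fin N, τ.g k.succ * (∑ i, σ.q i * (0 : ℝ))

/-- The follower's expected utility in the whole game: after root actions `(l_i, f_{k+1})`
the follower gets `N·M − W − M` if `i = k` and `−W − M` otherwise. -/
def EU2 (N : ℕ) (w : Fin N → ℕ) (W M : ℕ) (σ : LStrat N) (τ : FStrat N) : ℝ :=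
  τ.g 0 * (∑ i, σ.q i * subEU2 N w σ τ i) +
    ∑ k : Fin N, τ.g k.succ *
      (∑ i, σ.q i *
        (if i = k then (N : ℝ) * (M : ℝ) - (W : ℝ) - (M : ℝ) else -(W : ℝ) - (M : ℝ)))

/-- `τ` is a best response of the follower to the leader strategy `σ`. -/
def BestResponse (N : ℕ) (w : Fin N → ℕ) (W M : ℕ) (σ : LStrat N) (τ : FStrat N) : Prop :=
  FValid τ ∧ ∀ τ' : FStrat N, FValid τ' → EU2 N w W M σ τ' ≤ EU2 N w W M σ τ

variable {N : ℕ}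

def knapsackLeader (N : ℕ) (J : Finset (Fin N)) : LStrat N :=
  ⟨fun _ => (N : ℝ)⁻¹, fun i => if i ∈ J then 1 else 0⟩

def knapsackFollower (N : ℕ) (J : Finset (Fin N)) : FStrat N :=
  ⟨fun k => if k = 0 then 1 else 0, fun i => if i ∈ J then 1 else 0⟩

theorem FValid.g_zero_le_one {τ : FStrat N} (hτ : FValid τ) : τ.g 0 ≤ 1 :=
  hτ.2.1 ▸ Finset.single_le_sum (fun k _ => hτ.1 k) (Finset.mem_univ 0)

theorem sum_g_succ_eq_one_sub {τ : FStrat N} (hτ : ∑ k, τ.g k = 1) :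
    ∑ k : Fin N, τ.g k.succ = 1 - τ.g 0 := by
  rw [← hτ, Fin.sum_univ_succ]
  ring

theorem knapsackFollower_valid (J : Finset (Fin N)) : FValid (knapsackFollower N J) := by
  refine ⟨fun k => ?_, by simp [knapsackFollower], fun i => ?_⟩ <;>
    simp only [knapsackFollower] <;> split_ifs <;> norm_num

theorem subEU1_eq (v : Fin N → ℕ) (σ : LStrat N) (τ : FStrat N) (i : Fin N) :
    subEU1 N v σ τ i = N * (τ.s i * v i) := by
  unfold subEU1
  ring

theorem subEU2_eq (w : Fin N → ℕ) (σ : LStrat N) (τ : FStrat N) (i : Fin N) :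
    subEU2 N w σ τ i = -(N * (w i * (σ.r i + (1 - σ.r i) * τ.s i))) := by
  unfold subEU2
  ring

theorem sum_uniform_root_deviation (W M : ℕ) (k : Fin N) :
    ∑ i : Fin N, (N : ℝ)⁻¹ *
      (if i = k then (N : ℝ) * M - W - M else -(W : ℝ) - M) = -W := by
  have hN : (N : ℝ) ≠ 0 := Nat.cast_ne_zero.mpr k.pos.ne'
  have hsplit : ∀ i : Fin N, (if i = k then (N : ℝ) * M - W - M else -(W : ℝ) - M) =
      (if i = k then (N : ℝ) * M else 0) + (-(W : ℝ) - M) := by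
    intro i
    split_ifs <;> ring
  simp only [hsplit, ← Finset.mul_sum, Finset.sum_add_distrib, Fintype.sum_ite_eq',
    Finset.sum_const, Finset.card_univ, Fintype.card_fin, nsmul_eq_mul]
  field_simp
  ring

theorem EU1_of_uniform {σ : LStrat N} (hq : ∀ i, σ.q i = (N : ℝ)⁻¹) (v : Fin N → ℕ)
    (τ : FStrat N) : EU1 N v σ τ = τ.g 0 * ∑ i, τ.s i * v i := by
  simp only [EU1, mul_zero, Finset.sum_const_zero, add_zero, hq, subEU1_eq]
  congr 1
  refine Finset.sum_congr rfl fun i _ => ?_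
  rw [inv_mul_cancel_left₀ (Nat.cast_ne_zero.mpr i.pos.ne')]

theorem EU2_of_uniform {σ : LStrat N} (hq : ∀ i, σ.q i = (N : ℝ)⁻¹) (w : Fin N → ℕ)
    (W M : ℕ) {τ : FStrat N} (hτ : ∑ k, τ.g k = 1) :
    EU2 N w W M σ τ =
      -(τ.g 0 * ∑ i, w i * (σ.r i + (1 - σ.r i) * τ.s i)) - (1 - τ.g 0) * W := by
  have hsub : ∀ i, σ.q i * subEU2 N w σ τ i = -(w i * (σ.r i + (1 - σ.r i) * τ.s i)) := by
    intro i
    rw [hq, subEU2_eq, mul_neg, inv_mul_cancel_left₀ (Nat.cast_ne_zero.mpr i.pos.ne')]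
  simp only [EU2, hsub]
  simp only [hq, sum_uniform_root_deviation]
  rw [← Finset.sum_mul, sum_g_succ_eq_one_sub hτ, Finset.sum_neg_distrib]
  ring

theorem sum_weight_knapsackLeader (w : Fin N → ℕ) (J : Finset (Fin N)) (τ : FStrat N) :
    ∑ i, (w i : ℝ) * ((knapsackLeader N J).r i + (1 - (knapsackLeader N J).r i) * τ.s i) =
      ∑ i ∈ J, (w i : ℝ) + ∑ i ∈ Jᶜ, w i * τ.s i := by
  rw [← Finset.sum_add_sum_compl J]
  congr 1 <;> refine Finset.sum_congr rfl fun i hi => ?_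
  · simp [knapsackLeader, hi]
  · simp [knapsackLeader, Finset.mem_compl.mp hi]

/-- The subtracted bracket is the follower's regret: both of its terms are nonnegative as soon as
`J` is feasible, and they vanish at `knapsackFollower N J`. -/
theorem EU2_knapsackLeader (w : Fin N → ℕ) (W M : ℕ) (J : Finset (Fin N)) {τ : FStrat N}
    (hτ : ∑ k, τ.g k = 1) :
    EU2 N w W M (knapsackLeader N J) τ = -(∑ i ∈ J, (w i : ℝ)) -
      ((1 - τ.g 0) * (W - ∑ i ∈ J, (w i : ℝ)) + τ.g 0 * ∑ i ∈ Jᶜ, w i * τ.s i) := by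
  rw [EU2_of_uniform (fun _ => rfl) w W M hτ, sum_weight_knapsackLeader]
  ring

theorem EU2_knapsackFollower (w : Fin N → ℕ) (W M : ℕ) (J : Finset (Fin N)) :
    EU2 N w W M (knapsackLeader N J) (knapsackFollower N J) = -(∑ i ∈ J, (w i : ℝ)) := by
  rw [EU2_knapsackLeader w W M J (knapsackFollower_valid J).2.1]
  simp [knapsackFollower, Finset.inter_comm, Finset.inter_compl]

theorem EU1_knapsackFollower (v : Fin N → ℕ) (J : Finset (Fin N)) :
    EU1 N v (knapsackLeader N J) (knapsackFollower N J) = ∑ i ∈ J, (v i : ℝ) := by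
  rw [EU1_of_uniform (fun _ => rfl)]
  simp [knapsackFollower, Finset.sum_ite_mem]

section Feasible

variable {w : Fin N → ℕ} {W M : ℕ} {J : Finset (Fin N)}

theorem regret_terms_nonneg (hJ : ∑ i ∈ J, w i ≤ W) {τ : FStrat N} (hτ : FValid τ) :
    0 ≤ (1 - τ.g 0) * (W - ∑ i ∈ J, (w i : ℝ)) ∧ 0 ≤ τ.g 0 * ∑ i ∈ Jᶜ, (w i : ℝ) * τ.s i :=
  ⟨mul_nonneg (sub_nonneg.mpr hτ.g_zero_le_one) (sub_nonneg.mpr (by exact_mod_cast hJ)),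
    mul_nonneg (hτ.1 0) <|
      Finset.sum_nonneg fun i _ => mul_nonneg (Nat.cast_nonneg _) (hτ.2.2 i).1⟩

theorem EU2_le_of_valid (hJ : ∑ i ∈ J, w i ≤ W) {τ : FStrat N} (hτ : FValid τ) :
    EU2 N w W M (knapsackLeader N J) τ ≤ -(∑ i ∈ J, (w i : ℝ)) := by
  have := regret_terms_nonneg hJ hτ
  rw [EU2_knapsackLeader w W M J hτ.2.1]
  linarith

theorem knapsackFollower_bestResponse (hJ : ∑ i ∈ J, w i ≤ W) :
    BestResponse N w W M (knapsackLeader N J) (knapsackFollower N J) :=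
  ⟨knapsackFollower_valid J, fun _ hτ =>
    (EU2_le_of_valid hJ hτ).trans_eq (EU2_knapsackFollower w W M J).symm⟩

theorem BestResponse.g_zero_mul_s_eq_zero (hw : ∀ i, 0 < w i)
    (hJ : ∑ i ∈ J, w i ≤ W) {τ : FStrat N} (hτ : BestResponse N w W M (knapsackLeader N J) τ)
    {i : Fin N} (hi : i ∉ J) : τ.g 0 * τ.s i = 0 := by
  have hEU2 : EU2 N w W M (knapsackLeader N J) τ = -(∑ i ∈ J, (w i : ℝ)) :=
    le_antisymm (EU2_le_of_valid hJ hτ.1) <|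
      (EU2_knapsackFollower w W M J).symm.trans_le (hτ.2 _ (knapsackFollower_valid J))
  have hregret := regret_terms_nonneg hJ hτ.1
  rw [EU2_knapsackLeader w W M J hτ.1.2.1] at hEU2
  have hzero : ∑ j ∈ Jᶜ, τ.g 0 * ((w j : ℝ) * τ.s j) = 0 := by
    rw [← Finset.mul_sum]
    linarith
  have hi' := (Finset.sum_eq_zero_iff_of_nonneg (fun j _ =>
    mul_nonneg (hτ.1.1 0) (mul_nonneg (Nat.cast_nonneg _) (hτ.1.2.2 j).1))).mp hzero i
    (Finset.mem_compl.mpr hi)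
  rw [mul_left_comm, mul_eq_zero] at hi'
  exact hi'.resolve_left (Nat.cast_ne_zero.mpr (hw i).ne')

theorem EU1_le_of_bestResponse (hw : ∀ i, 0 < w i) (hJ : ∑ i ∈ J, w i ≤ W) (v : Fin N → ℕ)
    {τ : FStrat N} (hτ : BestResponse N w W M (knapsackLeader N J) τ) :
    EU1 N v (knapsackLeader N J) τ ≤ ∑ i ∈ J, (v i : ℝ) := by
  rw [EU1_of_uniform (fun _ => rfl), Finset.mul_sum]
  calc ∑ i, τ.g 0 * (τ.s i * v i) ≤ ∑ i, if i ∈ J then (v i : ℝ) else 0 := by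
        refine Finset.sum_le_sum fun i _ => ?_
        rw [← mul_assoc]
        split_ifs with hi
        · exact mul_le_of_le_one_left (Nat.cast_nonneg _)
            (mul_le_one₀ hτ.1.g_zero_le_one (hτ.1.2.2 i).1 (hτ.1.2.2 i).2)
        · rw [hτ.g_zero_mul_s_eq_zero hw hJ hi, zero_mul]
    _ = ∑ i ∈ J, (v i : ℝ) := by rw [Finset.sum_ite_mem, Finset.univ_inter]

end Feasible

theorem uniform_strategy_payoff_general
    (N W M : ℕ) (w v : Fin N → ℕ)
    (hw : ∀ i, 0 < w i)
    (J : Finset (Fin N)) (hJ : (∑ i ∈ J, w i) ≤ W) :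
    let σ : LStrat N := ⟨fun _ => (N : ℝ)⁻¹, fun i => if i ∈ J then 1 else 0⟩
    let τ : FStrat N := ⟨fun k => if k = 0 then 1 else 0, fun i => if i ∈ J then 1 else 0⟩
    BestResponse N w W M σ τ ∧
      (∀ τ' : FStrat N, BestResponse N w W M σ τ' → EU1 N v σ τ' ≤ EU1 N v σ τ) ∧
      EU1 N v σ τ = ∑ i ∈ J, (v i : ℝ) :=
  ⟨knapsackFollower_bestResponse hJ,
    fun _ hτ => (EU1_le_of_bestResponse hw hJ v hτ).trans_eq (EU1_knapsackFollower v J).symm,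
    EU1_knapsackFollower v J⟩

/-- For every feasible knapsack subset `J` (total weight at most `W`),
consider the leader behavioral strategy that plays uniformly over `l_1,…,l_N` at the root
and plays `⊕` with probability 1 in `I_i` for `i ∈ J` and `⊖` with probability 1 otherwise.
Under the follower best response with ties broken in favor of the leader — playing `f_0` at
the root and `L` in `I_i` for `i ∈ J`, `R` for `i ∉ J` — the leader's expected utility
equals `Σ_{i∈J} v i`. -/
theorem uniform_strategy_payoff
    (N W M : ℕ) (hN : 0 < N) (w v : Fin N → ℕ)
    (hw : ∀ i, 0 < w i) (hv : ∀ i, 0 < v i)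
    (hM : IsLeast {m : ℕ | ∀ i, W * N * v i < m ∧ N * w i < m} M)
    (J : Finset (Fin N)) (hJ : (∑ i ∈ J, w i) ≤ W) :
    let σ : LStrat N := ⟨fun _ => (N : ℝ)⁻¹, fun i => if i ∈ J then 1 else 0⟩
    let τ : FStrat N := ⟨fun k => if k = 0 then 1 else 0, fun i => if i ∈ J then 1 else 0⟩
    BestResponse N w W M σ τ ∧
      (∀ τ' : FStrat N, BestResponse N w W M σ τ' → EU1 N v σ τ' ≤ EU1 N v σ τ) ∧
      EU1 N v σ τ = ∑ i ∈ J, (v i : ℝ) :=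
  uniform_strategy_payoff_general N W M w v hw J hJ

end KnapsackGame
end
end

section
/- Let G be the concurrent-move game tree associated with a Knapsack instance (w_1,…,w_N; v_1,…,v_N; W) with positive integer weights and values. For every leader behavioral strategy σ1 in G there exists a leader behavioral strategy σ1' that plays a pure action (⊕ or ⊖ with probability 1) in every subgame I_i, such that the leader's Stackelberg payoff of σ1' (the leader's expected utility under a follower best response to σ1' with ties broken in favor of the leader) is at least the leader's Stackelberg payoff of σ1. -/
open scoped BigOperators

noncomputable section

namespace KnapsackGame

/-!
Against a leader strategy `σ`, the follower's utility after `f_0` is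
`-∑ q_i·N·w_i·(r_i + (1 - r_i)·s_i)`, so in a subgame with `r_i < 1` the follower strictly
prefers `R`, and is indifferent when `r_i = 1`; the leader's utility does not depend on `r` at
all. Round `σ` down to `σ'` (`r'_i = 1` iff `r_i = 1`, else `0`). If a best response `τ` to
`σ` enters the subgames with positive probability, it must answer `R` wherever `q_i > 0` and
`r_i < 1`, and entering is at least as good for it as every exit `f_k`. Rounding `r` down only
makes entering more attractive, so entering and playing `τ`'s moves where `r_i = 1` (and `R`
elsewhere) is a best response to `σ'` earning the leader at least what `τ` earns against `σ`.
If `τ` never enters, the leader gets `0`, and Stackelberg payoffs are nonnegative.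
-/

section

variable {N : ℕ}

def LStrat.round (σ : LStrat N) : LStrat N :=
  ⟨σ.q, fun i => if σ.r i = 1 then 1 else 0⟩

/-- The follower's subgame moves `s`, replaced by `R` wherever `σ` does not play `⊕` surely. -/
def LStrat.roundResponse (σ : LStrat N) (s : Fin N → ℝ) : Fin N → ℝ :=
  fun i => if σ.r i = 1 then s i else 0

/-- The follower's root action `f_k` played surely (`k = 0` enters the subgames),
with moves `s` in the subgames. -/
def FStrat.pure (k : Fin (N + 1)) (s : Fin N → ℝ) : FStrat N :=
  ⟨Pi.single k 1, s⟩

def enterEU1 (v : Fin N → ℕ) (σ : LStrat N) (s : Fin N → ℝ) : ℝ :=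
  ∑ i, σ.q i * (s i * ((N : ℝ) * (v i : ℝ)))

def enterEU2 (w : Fin N → ℕ) (σ : LStrat N) (s : Fin N → ℝ) : ℝ :=
  ∑ i, σ.q i * (-((N : ℝ) * (w i : ℝ)) * (σ.r i + (1 - σ.r i) * s i))

def exitEU2 (W M : ℕ) (σ : LStrat N) (k : Fin N) : ℝ :=
  ∑ i, σ.q i * (if i = k then (N : ℝ) * (M : ℝ) - (W : ℝ) - (M : ℝ) else -(W : ℝ) - (M : ℝ))

section Strategies

variable {σ : LStrat N} {τ : FStrat N} {s : Fin N → ℝ}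

theorem LValid.round (hσ : LValid σ) : LValid σ.round := by
  refine ⟨hσ.1, hσ.2.1, fun i => ?_⟩
  dsimp only [LStrat.round]
  split_ifs <;> norm_num

theorem LStrat.round_r_eq_zero_or_eq_one (σ : LStrat N) (i : Fin N) :
    σ.round.r i = 0 ∨ σ.round.r i = 1 := by
  dsimp only [LStrat.round]
  split_ifs <;> simp

theorem LValid.round_r_le (hσ : LValid σ) (i : Fin N) : σ.round.r i ≤ σ.r i := by
  dsimp only [LStrat.round]
  split_ifs with h
  · exact h.ge
  · exact (hσ.2.2 i).1

theorem LStrat.roundResponse_mem (σ : LStrat N) (hs : ∀ i, 0 ≤ s i ∧ s i ≤ 1) (i : Fin N) :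
    0 ≤ σ.roundResponse s i ∧ σ.roundResponse s i ≤ 1 := by
  unfold LStrat.roundResponse
  split_ifs
  · exact hs i
  · norm_num

theorem FValid.pure (k : Fin (N + 1)) (hs : ∀ i, 0 ≤ s i ∧ s i ≤ 1) :
    FValid (FStrat.pure k s) := by
  refine ⟨fun j => ?_, by simp [FStrat.pure], hs⟩
  rcases eq_or_ne j k with rfl | h
  · simp [FStrat.pure]
  · simp [FStrat.pure, h]

theorem FValid.sum_succ (hτ : FValid τ) : ∑ k : Fin N, τ.g k.succ = 1 - τ.g 0 := by
  linarith [hτ.2.1, Fin.sum_univ_succ τ.g]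

theorem FValid.sum_succ_mul_le (hτ : FValid τ) {b : Fin N → ℝ} {c : ℝ} (hb : ∀ k, b k ≤ c) :
    ∑ k, τ.g k.succ * b k ≤ (1 - τ.g 0) * c := by
  rw [← hτ.sum_succ, Finset.sum_mul]
  exact Finset.sum_le_sum fun k _ => mul_le_mul_of_nonneg_left (hb k) (hτ.1 k.succ)

end Strategies

section LeaderUtility

variable {v : Fin N → ℕ} {σ : LStrat N} {τ : FStrat N} {s : Fin N → ℝ}

theorem EU1_eq (v : Fin N → ℕ) (σ : LStrat N) (τ : FStrat N) :
    EU1 N v σ τ = τ.g 0 * enterEU1 v σ τ.s := by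
  simp only [EU1, subEU1, enterEU1, mul_zero, add_zero, Finset.sum_const_zero]
  congr 1
  exact Finset.sum_congr rfl fun i _ => by ring

theorem EU1_pure_zero (v : Fin N → ℕ) (σ : LStrat N) (s : Fin N → ℝ) :
    EU1 N v σ (FStrat.pure 0 s) = enterEU1 v σ s := by
  simp [EU1_eq, FStrat.pure]

theorem enterEU1_nonneg (hσ : LValid σ) (hs : ∀ i, 0 ≤ s i) : 0 ≤ enterEU1 v σ s :=
  Finset.sum_nonneg fun i _ => mul_nonneg (hσ.1 i) (mul_nonneg (hs i) (by positivity))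

theorem EU1_nonneg (hσ : LValid σ) (hτ : FValid τ) : 0 ≤ EU1 N v σ τ := by
  rw [EU1_eq]
  exact mul_nonneg (hτ.1 0) (enterEU1_nonneg hσ fun i => (hτ.2.2 i).1)

theorem EU1_le_enterEU1 (hσ : LValid σ) (hτ : FValid τ) : EU1 N v σ τ ≤ enterEU1 v σ τ.s := by
  have hg : τ.g 0 ≤ 1 := by
    have := Finset.sum_nonneg fun (k : Fin N) (_ : k ∈ Finset.univ) => hτ.1 k.succ
    linarith [hτ.sum_succ]
  rw [EU1_eq]
  exact mul_le_of_le_one_left (enterEU1_nonneg hσ fun i => (hτ.2.2 i).1) hg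

end LeaderUtility

section FollowerUtility

variable {w : Fin N → ℕ} {W M : ℕ} {σ : LStrat N} {τ : FStrat N} {s s' : Fin N → ℝ}

theorem EU2_eq (w : Fin N → ℕ) (W M : ℕ) (σ : LStrat N) (τ : FStrat N) :
    EU2 N w W M σ τ = τ.g 0 * enterEU2 w σ τ.s + ∑ k, τ.g k.succ * exitEU2 W M σ k := by
  unfold EU2 subEU2 enterEU2 exitEU2
  congr 2
  exact Finset.sum_congr rfl fun i _ => by ring

theorem EU2_pure_zero (σ : LStrat N) (s : Fin N → ℝ) :
    EU2 N w W M σ (FStrat.pure 0 s) = enterEU2 w σ s := by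
  simp [EU2_eq, FStrat.pure, Fin.succ_ne_zero]

theorem EU2_pure_succ (σ : LStrat N) (k : Fin N) (s : Fin N → ℝ) :
    EU2 N w W M σ (FStrat.pure k.succ s) = exitEU2 W M σ k := by
  simp [EU2_eq, FStrat.pure, Pi.single_apply, (Fin.succ_ne_zero k).symm]

theorem enterEU2_sub (w : Fin N → ℕ) (σ : LStrat N) (s s' : Fin N → ℝ) :
    enterEU2 w σ s' - enterEU2 w σ s =
      ∑ i, σ.q i * ((N : ℝ) * (w i : ℝ)) * ((1 - σ.r i) * (s i - s' i)) := by
  rw [enterEU2, enterEU2, ← Finset.sum_sub_distrib]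
  exact Finset.sum_congr rfl fun i _ => by ring

theorem enterEU2_le_zero (hσ : LValid σ) (hs : ∀ i, 0 ≤ s i) :
    enterEU2 w σ s ≤ enterEU2 w σ 0 := by
  refine sub_nonneg.mp ((enterEU2_sub w σ s 0).symm ▸ Finset.sum_nonneg fun i _ => ?_)
  have := hσ.2.2 i
  have := hs i
  simp only [Pi.zero_apply, sub_zero]
  exact mul_nonneg (mul_nonneg (hσ.1 i) (by positivity)) (mul_nonneg (by linarith) (hs i))

theorem enterEU2_zero_le_round (hσ : LValid σ) : enterEU2 w σ 0 ≤ enterEU2 w σ.round 0 := by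
  refine Finset.sum_le_sum fun i _ => ?_
  simp only [Pi.zero_apply, mul_zero, add_zero, neg_mul, mul_neg, neg_le_neg_iff]
  exact mul_le_mul_of_nonneg_left (mul_le_mul_of_nonneg_left (hσ.round_r_le i) (by positivity))
    (hσ.1 i)

theorem enterEU2_round_roundResponse (σ : LStrat N) (s : Fin N → ℝ) :
    enterEU2 w σ.round (σ.roundResponse s) = enterEU2 w σ.round 0 := by
  refine (sub_eq_zero.mp ((enterEU2_sub w σ.round 0 _).trans ?_))
  refine Finset.sum_eq_zero fun i _ => ?_
  by_cases h : σ.r i = 1 <;> simp [LStrat.round, LStrat.roundResponse, h]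

theorem FValid.EU2_le (hτ : FValid τ) {c : ℝ} (henter : enterEU2 w σ τ.s ≤ c)
    (hexit : ∀ k, exitEU2 W M σ k ≤ c) : EU2 N w W M σ τ ≤ c := by
  rw [EU2_eq]
  nlinarith [hτ.sum_succ_mul_le hexit, mul_le_mul_of_nonneg_left henter (hτ.1 0)]

end FollowerUtility

namespace BestResponse

variable {w : Fin N → ℕ} {W M : ℕ} {σ : LStrat N} {τ : FStrat N} {s : Fin N → ℝ}

theorem enterEU2_le (hτ : BestResponse N w W M σ τ) (hg : 0 < τ.g 0)
    (hs : ∀ i, 0 ≤ s i ∧ s i ≤ 1) : enterEU2 w σ s ≤ enterEU2 w σ τ.s := by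
  have h := hτ.2 ⟨τ.g, s⟩ ⟨hτ.1.1, hτ.1.2.1, hs⟩
  rw [EU2_eq, EU2_eq] at h
  exact le_of_mul_le_mul_left (by linarith) hg

theorem exitEU2_le (hτ : BestResponse N w W M σ τ) (hg : 0 < τ.g 0) (k : Fin N) :
    exitEU2 W M σ k ≤ enterEU2 w σ τ.s := by
  set V := EU2 N w W M σ τ
  have hexit : ∀ j, exitEU2 W M σ j ≤ V := fun j =>
    EU2_pure_succ (w := w) σ j τ.s ▸ hτ.2 _ (FValid.pure _ hτ.1.2.2)
  have hV : V ≤ τ.g 0 * enterEU2 w σ τ.s + (1 - τ.g 0) * V :=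
    (EU2_eq w W M σ τ).trans_le (add_le_add_right (hτ.1.sum_succ_mul_le hexit) _)
  have henter : V ≤ enterEU2 w σ τ.s := le_of_mul_le_mul_left (by linarith) hg
  exact (hexit k).trans henter

/-- Switching to `R` in every subgame with `r_j < 1` gains the follower
`τ.g 0 · ∑_j q_j · N · w_j · (1 - r_j) · s_j`, a sum of nonnegative terms. -/
theorem q_mul_s_eq_zero (hτ : BestResponse N w W M σ τ) (hσ : LValid σ) (hw : ∀ i, 0 < w i)
    (hg : 0 < τ.g 0) {i : Fin N} (hi : σ.r i ≠ 1) : σ.q i * τ.s i = 0 := by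
  have hterm : ∀ j ∈ Finset.univ, 0 ≤ σ.q j * ((N : ℝ) * (w j : ℝ)) *
      ((1 - σ.r j) * (τ.s j - σ.roundResponse τ.s j)) := fun j _ => by
    have := hσ.2.2 j
    have := hτ.1.2.2 j
    unfold LStrat.roundResponse
    split_ifs
    · simp
    · exact mul_nonneg (mul_nonneg (hσ.1 j) (by positivity)) (by nlinarith)
  have hsum := sub_nonpos.mpr (hτ.enterEU2_le hg (σ.roundResponse_mem hτ.1.2.2))
  rw [enterEU2_sub] at hsum
  have hi0 := (Finset.sum_eq_zero_iff_of_nonneg hterm).mp (le_antisymm hsum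
    (Finset.sum_nonneg hterm)) i (Finset.mem_univ i)
  have hNw : (0 : ℝ) < (N : ℝ) * (w i : ℝ) := by
    have := i.pos
    have := hw i
    positivity
  have hr : 0 < 1 - σ.r i := sub_pos.mpr (lt_of_le_of_ne (hσ.2.2 i).2 hi)
  simp only [LStrat.roundResponse, if_neg hi, sub_zero] at hi0
  nlinarith [mul_pos hNw hr]

theorem enterEU1_roundResponse (hτ : BestResponse N w W M σ τ) (hσ : LValid σ)
    (hw : ∀ i, 0 < w i) (hg : 0 < τ.g 0) (v : Fin N → ℕ) :
    enterEU1 v σ (σ.roundResponse τ.s) = enterEU1 v σ τ.s := by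
  refine Finset.sum_congr rfl fun i _ => ?_
  by_cases h : σ.r i = 1
  · simp [LStrat.roundResponse, h]
  · simp only [LStrat.roundResponse, if_neg h, zero_mul, mul_zero]
    rw [← mul_assoc, hτ.q_mul_s_eq_zero hσ hw hg h, zero_mul]

theorem round (hτ : BestResponse N w W M σ τ) (hσ : LValid σ) (hg : 0 < τ.g 0) :
    BestResponse N w W M σ.round (FStrat.pure 0 (σ.roundResponse τ.s)) := by
  refine ⟨FValid.pure 0 (σ.roundResponse_mem hτ.1.2.2), fun τ' hτ' => ?_⟩
  rw [EU2_pure_zero, enterEU2_round_roundResponse]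
  refine hτ'.EU2_le (enterEU2_le_zero hσ.round fun i => (hτ'.2.2 i).1) fun k => ?_
  calc exitEU2 W M σ.round k = exitEU2 W M σ k := rfl
    _ ≤ enterEU2 w σ τ.s := hτ.exitEU2_le hg k
    _ ≤ enterEU2 w σ 0 := enterEU2_le_zero hσ fun i => (hτ.1.2.2 i).1
    _ ≤ enterEU2 w σ.round 0 := enterEU2_zero_le_round hσ

end BestResponse

end

theorem wlog_pure_in_subgames_general
    (N W M : ℕ) (w v : Fin N → ℕ)
    (hw : ∀ i, 0 < w i)
    (σ : LStrat N) (hσ : LValid σ) :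
    ∃ σ' : LStrat N, LValid σ' ∧ (∀ i, σ'.r i = 0 ∨ σ'.r i = 1) ∧
      ∀ x x' : ℝ,
        IsGreatest {y : ℝ | ∃ τ : FStrat N, BestResponse N w W M σ τ ∧ y = EU1 N v σ τ} x →
        IsGreatest {y : ℝ | ∃ τ : FStrat N, BestResponse N w W M σ' τ ∧ y = EU1 N v σ' τ} x' →
        x ≤ x' := by
  refine ⟨σ.round, hσ.round, σ.round_r_eq_zero_or_eq_one, fun x x' hx hx' => ?_⟩
  obtain ⟨τ, hτ, rfl⟩ := hx.1
  rcases (hτ.1.1 0).eq_or_lt with hg | hg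
  · obtain ⟨τ', hτ', rfl⟩ := hx'.1
    rw [EU1_eq, ← hg, zero_mul]
    exact EU1_nonneg hσ.round hτ'.1
  · calc EU1 N v σ τ ≤ enterEU1 v σ τ.s := EU1_le_enterEU1 hσ hτ.1
      _ = enterEU1 v σ.round (σ.roundResponse τ.s) := (hτ.enterEU1_roundResponse hσ hw hg v).symm
      _ = EU1 N v σ.round (FStrat.pure 0 (σ.roundResponse τ.s)) := (EU1_pure_zero ..).symm
      _ ≤ x' := hx'.2 ⟨_, hτ.round hσ hg, rfl⟩

/-- In the concurrent-move game tree associated with a Knapsack instance,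
for every (valid) leader behavioral strategy `σ` there is a leader behavioral strategy `σ'`
that plays a pure action (`⊕` or `⊖` with probability 1) in every subgame `I_i` whose
Stackelberg payoff (the leader's expected utility under a follower best response with ties
broken in favor of the leader) is at least that of `σ`. -/
theorem wlog_pure_in_subgames
    (N W M : ℕ) (hN : 0 < N) (w v : Fin N → ℕ)
    (hw : ∀ i, 0 < w i) (hv : ∀ i, 0 < v i)
    (hM : IsLeast {m : ℕ | ∀ i, W * N * v i < m ∧ N * w i < m} M)
    (σ : LStrat N) (hσ : LValid σ) :
    ∃ σ' : LStrat N, LValid σ' ∧ (∀ i, σ'.r i = 0 ∨ σ'.r i = 1) ∧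
      ∀ x x' : ℝ,
        IsGreatest {y : ℝ | ∃ τ : FStrat N, BestResponse N w W M σ τ ∧ y = EU1 N v σ τ} x →
        IsGreatest {y : ℝ | ∃ τ : FStrat N, BestResponse N w W M σ' τ ∧ y = EU1 N v σ' τ} x' →
        x ≤ x' :=
  wlog_pure_in_subgames_general N W M w v hw σ hσ

end KnapsackGame
end
end
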